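/- arXiv:1901.01672 — 2 statements merged into one kernel-verified Lean document; each statement's English description precedes it below -/
import Mathlib

section
/- Let x_1, …, x_m ∈ ℝ^n, let (Z, C) be an initialization with C = 0, and let r ≥ 0. For the depth-d linear network and every 1 ≤ k ≤ d, writing sup for the supremum over all (W, B) with ‖(W,B)−(Z,C)‖_F ≤ r, one has the recursive layer-peeling bound E_ξ[ sup ‖ Σ_{i=1}^m ξ_i f^{(k)}_{(W,B)}(x_i) ‖ ] ≤ (‖Z_k‖_2 + r) · E_ξ[ sup ‖ Σ_{i=1}^m ξ_i f^{(k−1)}_{(W,B)}(x_i) ‖ ] + r √m, where ξ is uniform on {−1, 1}^m. -/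
open scoped BigOperators

noncomputable section

/-- Dimension of the `k`-th layer of a depth-`d` network with input dimension `n`
and `H` hidden units per layer: `dim 0 = n`, `dim d = 1`, and `H` in between. -/
def dim (n H d : ℕ) : ℕ → ℕ
  | 0 => n
  | (k + 1) => if k + 1 = d then 1 else H

/-- A parameter configuration of a depth-`d` feed-forward network. -/
structure Params (n H d : ℕ) where
  W : ∀ k : Fin d, Matrix (Fin (dim n H d (k + 1))) (Fin (dim n H d k)) ℝ
  b : ∀ k : Fin d, EuclideanSpace ℝ (Fin (dim n H d (k + 1)))

/-- Squared Frobenius norm of a matrix. -/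
def frobSq {p q : ℕ} (A : Matrix (Fin p) (Fin q) ℝ) : ℝ :=
  ∑ i, ∑ j, (A i j) ^ 2

/-- Frobenius norm of a matrix. -/
def frob {p q : ℕ} (A : Matrix (Fin p) (Fin q) ℝ) : ℝ := Real.sqrt (frobSq A)

/-- Spectral norm: operator norm of the associated map between Euclidean spaces. -/
def spec {p q : ℕ} (A : Matrix (Fin p) (Fin q) ℝ) : ℝ :=
  ‖LinearMap.toContinuousLinearMap (Matrix.toEuclideanLin A)‖

/-- `ℓ2` distance between two parameter configurations. -/
def paramDist {n H d : ℕ} (P Q : Params n H d) : ℝ :=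
  Real.sqrt (∑ k : Fin d, (frobSq (P.W k - Q.W k) + ‖P.b k - Q.b k‖ ^ 2))

/-- Coordinatewise ReLU. -/
def relu {p : ℕ} (v : EuclideanSpace ℝ (Fin p)) : EuclideanSpace ℝ (Fin p) :=
  WithLp.toLp 2 (fun i => max (v i) 0)

/-- Layer outputs of the ReLU network. -/
def layer {n H d : ℕ} (P : Params n H d) (x : EuclideanSpace ℝ (Fin n)) :
    (k : ℕ) → k ≤ d → EuclideanSpace ℝ (Fin (dim n H d k))
  | 0, _ => x
  | (k + 1), hk =>
      Matrix.toEuclideanLin (P.W ⟨k, hk⟩) (relu (layer P x k (Nat.le_of_succ_le hk)))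
        + P.b ⟨k, hk⟩

/-- Layer outputs of the linear network (no activation). -/
def linLayer {n H d : ℕ} (P : Params n H d) (x : EuclideanSpace ℝ (Fin n)) :
    (k : ℕ) → k ≤ d → EuclideanSpace ℝ (Fin (dim n H d k))
  | 0, _ => x
  | (k + 1), hk =>
      Matrix.toEuclideanLin (P.W ⟨k, hk⟩) (linLayer P x k (Nat.le_of_succ_le hk))
        + P.b ⟨k, hk⟩

lemma dim_last {n H d : ℕ} (hd : 0 < d) : dim n H d d = 1 := by
  cases d with
  | zero => omega
  | succ k => simp [dim]

/-- Real-valued output of the ReLU network. -/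
def netOut {n H d : ℕ} (hd : 0 < d) (P : Params n H d) (x : EuclideanSpace ℝ (Fin n)) : ℝ :=
  layer P x d le_rfl ⟨0, by rw [dim_last hd]; omega⟩

/-- Real-valued output of the linear network. -/
def linNetOut {n H d : ℕ} (hd : 0 < d) (P : Params n H d) (x : EuclideanSpace ℝ (Fin n)) : ℝ :=
  linLayer P x d le_rfl ⟨0, by rw [dim_last hd]; omega⟩

/-- Expectation over a Rademacher vector `ξ` drawn uniformly from `{-1,1}^m`. -/
def radExp (m : ℕ) (g : (Fin m → ℝ) → ℝ) : ℝ :=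
  (∑ ε : Fin m → Bool, g (fun i => if ε i then 1 else -1)) / 2 ^ m

/-!
Write `u_P = ∑ ξ_i f^{(k-1)}_P(x_i)`. The layer recursion gives
`∑ ξ_i f^{(k)}_P(x_i) = W_k u_P + (∑ ξ_i) b_k`, and inside the ball
`‖W_k‖₂ ≤ ‖Z_k‖₂ + ‖W_k - Z_k‖_F ≤ ‖Z_k‖₂ + r` and `‖b_k‖ ≤ r` (because `c_k = 0`).
So, for every fixed `ξ`, the supremum at layer `k` is at most `‖Z_k‖₂ + r` times the
supremum at layer `k - 1` plus `r |∑ ξ_i|`. Averaging over `ξ`, linearity of the expectation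
and `E|∑ ξ_i| ≤ (E (∑ ξ_i)²)^{1/2} = √m` finish the proof.
-/

open Finset

lemma radExp_mono {m : ℕ} {g h : (Fin m → ℝ) → ℝ} (hgh : ∀ ξ, g ξ ≤ h ξ) :
    radExp m g ≤ radExp m h := by
  unfold radExp
  gcongr with ε _
  exact hgh _

lemma radExp_add {m : ℕ} (g h : (Fin m → ℝ) → ℝ) :
    radExp m (fun ξ => g ξ + h ξ) = radExp m g + radExp m h := by
  simp only [radExp, sum_add_distrib, add_div]

lemma radExp_const_mul {m : ℕ} (c : ℝ) (g : (Fin m → ℝ) → ℝ) :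
    radExp m (fun ξ => c * g ξ) = c * radExp m g := by
  simp only [radExp, ← mul_sum, mul_div_assoc]

lemma radExp_sum {m : ℕ} {ι : Type*} (s : Finset ι) (g : ι → (Fin m → ℝ) → ℝ) :
    radExp m (fun ξ => ∑ j ∈ s, g j ξ) = ∑ j ∈ s, radExp m (g j) := by
  simp only [radExp, sum_div]
  exact sum_comm

lemma radExp_const (m : ℕ) (c : ℝ) : radExp m (fun _ => c) = c := by
  simp [radExp]

lemma radExp_le_sqrt_radExp_sq {m : ℕ} (g : (Fin m → ℝ) → ℝ) :
    radExp m g ≤ √(radExp m (fun ξ => g ξ ^ 2)) := by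
  refine (le_abs_self _).trans (Real.abs_le_sqrt ?_)
  have hcs := sq_sum_le_card_mul_sum_sq (s := (univ : Finset (Fin m → Bool)))
    (f := fun ε => g (fun i => if ε i then 1 else -1))
  simp only [card_univ, Fintype.card_fun, Fintype.card_bool, Fintype.card_fin] at hcs
  push_cast at hcs
  simp only [radExp, div_pow]
  rw [div_le_div_iff₀ (by positivity) (by positivity)]
  calc _ ≤ (2 ^ m * ∑ ε : Fin m → Bool, g (fun i => if ε i then 1 else -1) ^ 2) * 2 ^ m :=
        mul_le_mul_of_nonneg_right hcs (by positivity)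
    _ = _ := by ring

lemma radExp_mul_apply_of_ne {m : ℕ} {i j : Fin m} (hij : i ≠ j) :
    radExp m (fun ξ => ξ i * ξ j) = 0 := by
  -- split off the coordinate `i`: the two values of `ε i` cancel
  simp only [radExp]
  rw [← (Equiv.piSplitAt i fun _ => Bool).symm.sum_comp, Fintype.sum_prod_type]
  simp only [Equiv.piSplitAt_symm_apply, hij.symm, Fintype.sum_bool, ne_eq, ↓reduceDIte,
    ↓reduceIte, mul_ite, mul_one, mul_neg, Bool.false_eq_true, neg_neg, ← sum_add_distrib]
  rw [sum_eq_zero fun _ _ => by split_ifs <;> norm_num, zero_div]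

lemma radExp_mul_apply {m : ℕ} (i j : Fin m) :
    radExp m (fun ξ => ξ i * ξ j) = if i = j then 1 else 0 := by
  split_ifs with hij
  · subst hij
    calc radExp m (fun ξ => ξ i * ξ i) = radExp m (fun _ => 1) := by
          unfold radExp
          congr 1
          refine sum_congr rfl fun ε _ => ?_
          dsimp only
          split_ifs <;> norm_num
      _ = 1 := radExp_const m 1
  · exact radExp_mul_apply_of_ne hij

lemma radExp_sq_sum (m : ℕ) : radExp m (fun ξ => (∑ i, ξ i) ^ 2) = m := by
  simp only [sq, sum_mul_sum, radExp_sum, radExp_mul_apply]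
  simp

lemma radExp_abs_sum_le_sqrt (m : ℕ) : radExp m (fun ξ => |∑ i, ξ i|) ≤ √m := by
  simpa only [sq_abs, radExp_sq_sum] using radExp_le_sqrt_radExp_sq (fun ξ => |∑ i, ξ i|)

lemma frobSq_nonneg {p q : ℕ} (A : Matrix (Fin p) (Fin q) ℝ) : 0 ≤ frobSq A :=
  sum_nonneg fun _ _ => sum_nonneg fun _ _ => sq_nonneg _

lemma spec_nonneg {p q : ℕ} (A : Matrix (Fin p) (Fin q) ℝ) : 0 ≤ spec A := norm_nonneg _

lemma norm_toEuclideanLin_le {p q : ℕ} (A : Matrix (Fin p) (Fin q) ℝ)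
    (v : EuclideanSpace ℝ (Fin q)) : ‖Matrix.toEuclideanLin A v‖ ≤ spec A * ‖v‖ :=
  (LinearMap.toContinuousLinearMap (Matrix.toEuclideanLin A)).le_opNorm v

lemma spec_le_frob {p q : ℕ} (A : Matrix (Fin p) (Fin q) ℝ) : spec A ≤ frob A := by
  refine ContinuousLinearMap.opNorm_le_bound _ (Real.sqrt_nonneg _) fun v => ?_
  rw [LinearMap.coe_toContinuousLinearMap', EuclideanSpace.norm_eq, EuclideanSpace.norm_eq,
    frob, ← Real.sqrt_mul (frobSq_nonneg A)]
  refine Real.sqrt_le_sqrt ?_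
  rw [frobSq, sum_mul]
  simp only [Real.norm_eq_abs, sq_abs, Matrix.toLpLin_apply, Matrix.mulVec, dotProduct]
  exact sum_le_sum fun i _ => sum_mul_sq_le_sq_mul_sq _ _ _

lemma spec_le_spec_add_frob_sub {p q : ℕ} (A B : Matrix (Fin p) (Fin q) ℝ) :
    spec A ≤ spec B + frob (A - B) :=
  calc spec A = spec (B + (A - B)) := by rw [add_sub_cancel]
    _ ≤ spec B + spec (A - B) := by
        simp only [spec, map_add]
        exact norm_add_le _ _
    _ ≤ spec B + frob (A - B) := by gcongr; exact spec_le_frob _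

section paramDist

variable {n H d : ℕ} (P Q : Params n H d) (k : Fin d)

lemma paramDist_nonneg : 0 ≤ paramDist P Q := Real.sqrt_nonneg _

lemma paramDist_self : paramDist P P = 0 := by
  simp [paramDist, frobSq]

lemma frobSq_add_sq_le_sq_paramDist :
    frobSq (P.W k - Q.W k) + ‖P.b k - Q.b k‖ ^ 2 ≤ paramDist P Q ^ 2 := by
  have hnonneg : ∀ j : Fin d, 0 ≤ frobSq (P.W j - Q.W j) + ‖P.b j - Q.b j‖ ^ 2 :=
    fun j => add_nonneg (frobSq_nonneg _) (sq_nonneg _)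
  rw [paramDist, Real.sq_sqrt (sum_nonneg fun j _ => hnonneg j)]
  exact single_le_sum (fun j _ => hnonneg j) (mem_univ k)

lemma frob_sub_le_paramDist : frob (P.W k - Q.W k) ≤ paramDist P Q := by
  refine le_of_pow_le_pow_left₀ two_ne_zero (paramDist_nonneg P Q) ?_
  rw [frob, Real.sq_sqrt (frobSq_nonneg _)]
  exact (le_add_of_nonneg_right (sq_nonneg _)).trans (frobSq_add_sq_le_sq_paramDist P Q k)

lemma norm_sub_le_paramDist : ‖P.b k - Q.b k‖ ≤ paramDist P Q :=
  le_of_pow_le_pow_left₀ two_ne_zero (paramDist_nonneg P Q) <|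
    (le_add_of_nonneg_left (frobSq_nonneg _)).trans (frobSq_add_sq_le_sq_paramDist P Q k)

end paramDist

section linLayer

variable {n H d m : ℕ} {Z P : Params n H d} {r : ℝ}

lemma spec_le_of_paramDist_le (hP : paramDist P Z ≤ r) (k : Fin d) :
    spec (P.W k) ≤ spec (Z.W k) + r :=
  (spec_le_spec_add_frob_sub _ _).trans (by gcongr; exact (frob_sub_le_paramDist P Z k).trans hP)

lemma norm_b_le_of_paramDist_le (hC : ∀ k, Z.b k = 0) (hP : paramDist P Z ≤ r) (k : Fin d) :
    ‖P.b k‖ ≤ r := by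
  simpa only [hC k, sub_zero] using (norm_sub_le_paramDist P Z k).trans hP

lemma exists_forall_norm_linLayer_le (hC : ∀ k, Z.b k = 0) (v : EuclideanSpace ℝ (Fin n)) :
    ∀ (k : ℕ) (hk : k ≤ d), ∃ M, ∀ P : Params n H d, paramDist P Z ≤ r →
      ‖linLayer P v k hk‖ ≤ M
  | 0, _ => ⟨‖v‖, fun _ _ => le_rfl⟩
  | k + 1, hk => by
    obtain ⟨M, hM⟩ := exists_forall_norm_linLayer_le hC v k (Nat.le_of_succ_le hk)
    refine ⟨(spec (Z.W ⟨k, hk⟩) + r) * M + r, fun P hP => ?_⟩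
    have hspec := spec_le_of_paramDist_le hP ⟨k, hk⟩
    calc ‖linLayer P v (k + 1) hk‖
        ≤ spec (P.W ⟨k, hk⟩) * ‖linLayer P v k (Nat.le_of_succ_le hk)‖ + ‖P.b ⟨k, hk⟩‖ :=
          (norm_add_le _ _).trans (by gcongr; exact norm_toEuclideanLin_le _ _)
      _ ≤ (spec (Z.W ⟨k, hk⟩) + r) * M + r := by
          gcongr
          · exact (spec_nonneg _).trans hspec
          · exact hM P hP
          · exact norm_b_le_of_paramDist_le hC hP _

variable (x : Fin m → EuclideanSpace ℝ (Fin n)) (ξ : Fin m → ℝ)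

lemma sum_smul_linLayer_succ (P : Params n H d) (k : ℕ) (hk : k + 1 ≤ d) :
    ∑ i, ξ i • linLayer P (x i) (k + 1) hk
      = Matrix.toEuclideanLin (P.W ⟨k, hk⟩) (∑ i, ξ i • linLayer P (x i) k (Nat.le_of_succ_le hk))
        + (∑ i, ξ i) • P.b ⟨k, hk⟩ := by
  simp only [linLayer, map_sum, map_smul, sum_smul, smul_add, sum_add_distrib]

lemma norm_sum_smul_linLayer_succ_le (hC : ∀ k, Z.b k = 0) (hP : paramDist P Z ≤ r)
    (k : ℕ) (hk : k + 1 ≤ d) :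
    ‖∑ i, ξ i • linLayer P (x i) (k + 1) hk‖
      ≤ (spec (Z.W ⟨k, hk⟩) + r) * ‖∑ i, ξ i • linLayer P (x i) k (Nat.le_of_succ_le hk)‖
        + r * |∑ i, ξ i| := by
  rw [sum_smul_linLayer_succ, mul_comm r]
  refine (norm_add_le _ _).trans ?_
  rw [norm_smul, Real.norm_eq_abs]
  gcongr
  · exact (norm_toEuclideanLin_le _ _).trans (by gcongr; exact spec_le_of_paramDist_le hP _)
  · exact norm_b_le_of_paramDist_le hC hP _

-- Real `⨆` is junk (`0`) on unbounded families, so the suprema need this bound.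
lemma bddAbove_range_norm_sum_smul_linLayer (hC : ∀ k, Z.b k = 0) (k : ℕ) (hk : k ≤ d) :
    BddAbove (Set.range fun P : {P : Params n H d // paramDist P Z ≤ r} =>
      ‖∑ i, ξ i • linLayer P.1 (x i) k hk‖) := by
  choose M hM using fun i => exists_forall_norm_linLayer_le (r := r) hC (x i) k hk
  refine ⟨∑ i, |ξ i| * M i, ?_⟩
  rintro _ ⟨P, rfl⟩
  refine (norm_sum_le _ _).trans (sum_le_sum fun i _ => ?_)
  rw [norm_smul, Real.norm_eq_abs]
  exact mul_le_mul_of_nonneg_left (hM i P.1 P.2) (abs_nonneg _)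

lemma iSup_norm_sum_smul_linLayer_succ_le (hC : ∀ k, Z.b k = 0) (hr : 0 ≤ r)
    (k : ℕ) (hk : k + 1 ≤ d) :
    ⨆ P : {P : Params n H d // paramDist P Z ≤ r}, ‖∑ i, ξ i • linLayer P.1 (x i) (k + 1) hk‖
      ≤ (spec (Z.W ⟨k, hk⟩) + r) *
          (⨆ P : {P : Params n H d // paramDist P Z ≤ r},
            ‖∑ i, ξ i • linLayer P.1 (x i) k (Nat.le_of_succ_le hk)‖)
        + r * |∑ i, ξ i| := by
  have : Nonempty {P : Params n H d // paramDist P Z ≤ r} :=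
    ⟨⟨Z, (paramDist_self Z).trans_le hr⟩⟩
  refine ciSup_le fun P => (norm_sum_smul_linLayer_succ_le x ξ hC P.2 k hk).trans ?_
  gcongr
  · exact (spec_nonneg _).trans (spec_le_of_paramDist_le P.2 _)
  · exact le_ciSup (bddAbove_range_norm_sum_smul_linLayer x ξ hC k _) P

end linLayer

/-- recursive layer-peeling bound for the Rademacher sums of a
linear network over the Frobenius ball of radius `r` around the initialization. -/
theorem stmt1 {n H d m : ℕ}
    (x : Fin m → EuclideanSpace ℝ (Fin n))
    (Z : Params n H d) (hC : ∀ k, Z.b k = 0)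
    (r : ℝ) (hr : 0 ≤ r)
    (k : ℕ) (hk : k + 1 ≤ d) :
    radExp m (fun ξ =>
        ⨆ P : {P : Params n H d // paramDist P Z ≤ r},
          ‖∑ i, ξ i • linLayer P.1 (x i) (k + 1) hk‖)
      ≤ (spec (Z.W ⟨k, hk⟩) + r) *
          radExp m (fun ξ =>
            ⨆ P : {P : Params n H d // paramDist P Z ≤ r},
              ‖∑ i, ξ i • linLayer P.1 (x i) k (Nat.le_of_succ_le hk)‖)
        + r * Real.sqrt m := by
  refine (radExp_mono fun ξ => iSup_norm_sum_smul_linLayer_succ_le x ξ hC hr k hk).trans ?_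
  rw [radExp_add, radExp_const_mul, radExp_const_mul]
  gcongr
  exact radExp_abs_sum_le_sqrt m
end
end

section
/- Let d ≥ 3, H ≥ n ≥ 1, and let Z_1 ∈ ℝ^{H×n}, Z_k ∈ ℝ^{H×H} for 1 < k < d, and Z_d ∈ ℝ^{1×H} be random matrices all of whose entries are independent Gaussian N(0, 1/H) random variables. Then for every t ∈ (0, 1), with probability at least 1 − 2d e^{−H t² / 8}, the product of spectral norms satisfies ∏_{k=1}^d ‖Z_k‖_2 ≥ (1 − t)^{d/2}, and consequently the spectral-norm measure H^{d−1} ∏_{k=1}^d ‖Z_k‖_2 ≥ (1 − t)^{d/2} H^{d−1} grows with the width H as Ω(H^{d−1}). -/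
open scoped BigOperators

noncomputable section

/-!
If `‖Z_k‖₂² < 1 - t`, then, since `‖A‖_F² ≤ min(p, q) ‖A‖₂²` for a `p × q` matrix and
`max(p, q) ≥ H` in every layer, the `pq` entries of `Z_k` (i.i.d. `N(0, 1/H)`) have
`∑ Z_ij² ≤ (1 - t) pq/H`. This chi-square lower tail has probability at most `exp(-pq t²/4)`
by Chernoff's bound at `s = t/(2v)`, because `E exp(-s X²) = (1 + 2sv)^(-1/2)` for `X ~ N(0, v)`, and
`log(1 + t) ≥ 2t/(t + 2)`. A union bound over the `d` layers gives `‖Z_k‖₂ ≥ √(1 - t)`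
for all `k` outside an event of probability `d exp(-Ht²/4)`.
-/

open MeasureTheory ProbabilityTheory Real
open scoped NNReal ENNReal Matrix Matrix.Norms.L2Operator

section SpectralNorm

variable {p q : ℕ}

lemma spec_transpose (A : Matrix (Fin p) (Fin q) ℝ) : spec Aᵀ = spec A := by
  rw [← Matrix.conjTranspose_eq_transpose_of_trivial]
  exact Matrix.l2_opNorm_conjTranspose A

lemma sum_sq_col_le_spec_sq (A : Matrix (Fin p) (Fin q) ℝ) (j : Fin q) :
    ∑ i, A i j ^ 2 ≤ spec A ^ 2 := by
  have h := (LinearMap.toContinuousLinearMap (Matrix.toEuclideanLin A)).le_opNorm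
    (EuclideanSpace.single j 1)
  rw [PiLp.norm_single, norm_one, mul_one] at h
  have hcol : ‖Matrix.toEuclideanLin A (EuclideanSpace.single j 1)‖ ^ 2 = ∑ i, A i j ^ 2 := by
    simp [EuclideanSpace.norm_sq_eq, Matrix.toLpLin_apply]
  rw [← hcol]
  exact pow_le_pow_left₀ (norm_nonneg _) h 2

lemma frobSq_le_mul_spec_sq (A : Matrix (Fin p) (Fin q) ℝ) : frobSq A ≤ q * spec A ^ 2 := by
  rw [frobSq, Finset.sum_comm]
  simpa using Finset.sum_le_sum fun j (_ : j ∈ Finset.univ) => sum_sq_col_le_spec_sq A j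

lemma frobSq_transpose (A : Matrix (Fin p) (Fin q) ℝ) : frobSq Aᵀ = frobSq A :=
  Finset.sum_comm

lemma frobSq_le_min_mul_spec_sq (A : Matrix (Fin p) (Fin q) ℝ) :
    frobSq A ≤ min p q * spec A ^ 2 := by
  rcases le_total p q with h | h
  · simpa [min_eq_left h, frobSq_transpose, spec_transpose] using frobSq_le_mul_spec_sq Aᵀ
  · simpa [min_eq_right h] using frobSq_le_mul_spec_sq A

end SpectralNorm

lemma exp_mul_inv_sqrt_one_add_le {t : ℝ} (ht : 0 ≤ t) :
    exp (t * (1 - t) / 2) * (√(1 + t))⁻¹ ≤ exp (-t ^ 2 / 4) := by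
  have hlog := le_log_one_add_of_nonneg ht
  rw [sqrt_eq_rpow, rpow_def_of_pos (by linarith), ← exp_neg, ← exp_add, exp_le_exp]
  have : t * (1 - t) / 2 + t ^ 2 / 4 ≤ t / (t + 2) := by
    rw [le_div_iff₀ (by linarith)]; nlinarith
  rw [mul_div_assoc] at hlog
  linarith

section Gaussian

variable {Ω : Type*} [MeasurableSpace Ω] {μ : Measure Ω}

/-- For `2 s v ≥ 1` both sides are junk `0`: the integral diverges and `√` of a
nonpositive number is `0`. -/
lemma mgf_sq_of_map_eq_gaussianReal {X : Ω → ℝ} {v : ℝ≥0} (hv : v ≠ 0)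
    (hX : μ.map X = gaussianReal 0 v) (s : ℝ) :
    mgf (fun ω => X ω ^ 2) μ s = (√(1 - 2 * s * v))⁻¹ := by
  have hXm : AEMeasurable X μ :=
    .of_map_ne_zero (by rw [hX]; exact IsProbabilityMeasure.ne_zero _)
  have hpdf : ∀ x : ℝ, gaussianPDFReal 0 v x • exp (s * x ^ 2)
      = (√(2 * π * v))⁻¹ * exp (-((2 * v : ℝ)⁻¹ - s) * x ^ 2) := by
    intro x
    rw [gaussianPDFReal, smul_eq_mul, mul_assoc, ← exp_add]
    congr 2
    ring
  rw [mgf, ← integral_map (f := fun x => exp (s * x ^ 2)) hXm (by fun_prop), hX,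
    integral_gaussianReal_eq_integral_smul hv]
  simp_rw [hpdf]
  rw [integral_const_mul, integral_gaussian, ← sqrt_inv, ← sqrt_inv, ← sqrt_mul (by positivity)]
  have hv0 : (v : ℝ) ≠ 0 := by exact_mod_cast hv
  congr 1
  have hb : 1 - 2 * s * v = 2 * v * ((2 * v : ℝ)⁻¹ - s) := by field_simp
  rw [hb, mul_inv (2 * (v : ℝ)), div_eq_mul_inv, mul_inv (2 * π), mul_inv (2 : ℝ)]
  field_simp [pi_pos.ne']

lemma measure_sum_sq_le_le_exp {ι : Type*} [Fintype ι] {X : ι → Ω → ℝ} (hind : iIndepFun X μ)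
    {v : ℝ≥0} (hv : v ≠ 0) (hX : ∀ i, μ.map (X i) = gaussianReal 0 v) {t : ℝ} (ht : 0 ≤ t) :
    μ {ω | ∑ i, X i ω ^ 2 ≤ (1 - t) * (Fintype.card ι * v)}
      ≤ ENNReal.ofReal (exp (-(Fintype.card ι * t ^ 2) / 4)) := by
  have := hind.isProbabilityMeasure
  have hXm : ∀ i, AEMeasurable (X i) μ := fun i =>
    .of_map_ne_zero (by rw [hX]; exact IsProbabilityMeasure.ne_zero _)
  have hv0 : (0 : ℝ) < v := by positivity
  set m := Fintype.card ι
  set s : ℝ := -(t / (2 * v))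
  set S : Ω → ℝ := ∑ i, (fun x => x ^ 2) ∘ X i
  have hS : ∀ ω, S ω = ∑ i, X i ω ^ 2 := fun ω => Finset.sum_apply ω _ _
  have hS0 : ∀ ω, 0 ≤ S ω := fun ω => (hS ω).symm ▸ Finset.sum_nonneg fun i _ => sq_nonneg _
  have hs : s ≤ 0 := neg_nonpos.mpr (by positivity)
  have hint : Integrable (fun ω => exp (s * S ω)) μ := by
    have hSm : AEMeasurable S μ := Finset.aemeasurable_sum _ fun i _ => (hXm i).pow_const 2
    refine .of_bound (hSm.const_mul s).exp.aestronglyMeasurable 1 (ae_of_all _ fun ω => ?_)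
    rw [norm_of_nonneg (exp_pos _).le, exp_le_one_iff]
    exact mul_nonpos_of_nonpos_of_nonneg hs (hS0 ω)
  have hmgf : mgf S μ s = ((√(1 + t))⁻¹) ^ m := by
    rw [(hind.comp (fun _ x => x ^ 2) fun _ => measurable_id.pow_const 2).mgf_sum₀
      (fun i => (hXm i).pow_const 2)]
    simp only [Function.comp_def, mgf_sq_of_map_eq_gaussianReal hv (hX _)]
    rw [Finset.prod_const, Finset.card_univ]
    congr 3
    simp only [s]
    field_simp
    ring
  have hchernoff := measure_le_le_exp_mul_mgf ((1 - t) * (m * v)) hs hint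
  rw [hmgf, show -s * ((1 - t) * (m * v)) = m * (t * (1 - t) / 2) by simp only [s]; field_simp,
    exp_nat_mul, ← mul_pow] at hchernoff
  simp only [hS] at hchernoff
  calc μ {ω | ∑ i, X i ω ^ 2 ≤ (1 - t) * (m * v)}
      = ENNReal.ofReal (μ.real {ω | ∑ i, X i ω ^ 2 ≤ (1 - t) * (m * v)}) := by
        rw [measureReal_def, ENNReal.ofReal_toReal (measure_ne_top _ _)]
    _ ≤ ENNReal.ofReal (exp (-t ^ 2 / 4) ^ m) := by
        gcongr
        exact hchernoff.trans (pow_le_pow_left₀ (by positivity) (exp_mul_inv_sqrt_one_add_le ht) m)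
    _ = ENNReal.ofReal (exp (-(m * t ^ 2) / 4)) := by
        rw [← exp_nat_mul]; ring_nf

lemma measure_spec_sq_le_le_exp {p q : ℕ}
    {W : Ω → Matrix (Fin p) (Fin q) ℝ}
    (hind : iIndepFun (fun ij : Fin p × Fin q => fun ω => W ω ij.1 ij.2) μ)
    {v : ℝ≥0} (hv : v ≠ 0) (hW : ∀ i j, μ.map (fun ω => W ω i j) = gaussianReal 0 v)
    {t : ℝ} (ht : 0 ≤ t) :
    μ {ω | spec (W ω) ^ 2 ≤ (1 - t) * (max p q * v)}
      ≤ ENNReal.ofReal (exp (-(p * q * t ^ 2) / 4)) := by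
  have htail := measure_sum_sq_le_le_exp hind hv (fun ij => hW ij.1 ij.2) ht
  simp only [Fintype.card_prod, Fintype.card_fin, Nat.cast_mul] at htail
  refine (measure_mono fun ω hω => ?_).trans htail
  have hfrob : frobSq (W ω) ≤ (1 - t) * (p * q * v) := calc
    frobSq (W ω) ≤ min p q * spec (W ω) ^ 2 := frobSq_le_min_mul_spec_sq _
    _ ≤ min p q * ((1 - t) * (max p q * v)) := by gcongr; exact hω
    _ = (1 - t) * ((min p q * max p q : ℕ) * v) := by push_cast; ring
    _ = (1 - t) * (p * q * v) := by rw [min_mul_max]; push_cast; ring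
  rw [Set.mem_ofPred_eq, Fintype.sum_prod_type]
  exact hfrob

end Gaussian

lemma le_max_dim {n H d k : ℕ} (hd : 2 ≤ d) (hk : k < d) :
    H ≤ max (dim n H d (k + 1)) (dim n H d k) := by
  rcases k with _ | k
  · simp [dim, show 1 ≠ d by omega]
  · by_cases h : k + 2 = d
    · simp [dim, h, show k + 1 ≠ d by omega]
    · simp [dim, h]

lemma one_le_dim {n H d : ℕ} (hn : 1 ≤ n) (hH : 1 ≤ H) (k : ℕ) : 1 ≤ dim n H d k := by
  rcases k with _ | k
  · exact hn
  · simp only [dim]; split_ifs <;> omega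

lemma le_dim_mul_dim {n H d k : ℕ} (hd : 2 ≤ d) (hn : 1 ≤ n) (hH : 1 ≤ H) (hk : k < d) :
    H ≤ dim n H d (k + 1) * dim n H d k := by
  rw [← min_mul_max]
  exact (le_max_dim hd hk).trans
    (Nat.le_mul_of_pos_left _ (le_min (one_le_dim hn hH _) (one_le_dim hn hH _)))

lemma ofReal_one_sub_le_measure {Ω ι : Type*} [MeasurableSpace Ω] {μ : Measure Ω}
    [IsProbabilityMeasure μ] [Fintype ι] {A : Set Ω} {B : ι → Set Ω}
    (hA : ∀ ω, (∀ i, ω ∉ B i) → ω ∈ A) {ε : ℝ} (hε : 0 ≤ ε)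
    (hB : ∀ i, μ (B i) ≤ ENNReal.ofReal ε) :
    ENNReal.ofReal (1 - Fintype.card ι * ε) ≤ μ A := by
  have hAc : Aᶜ ⊆ ⋃ i, B i := fun ω hω => by
    by_contra h
    simp only [Set.mem_iUnion, not_exists] at h
    exact hω (hA ω h)
  rw [ENNReal.ofReal_sub _ (by positivity), ENNReal.ofReal_one, tsub_le_iff_right]
  calc 1 = μ (A ∪ Aᶜ) := by rw [Set.union_compl_self, measure_univ]
    _ ≤ μ A + μ (⋃ i, B i) := (measure_union_le _ _).trans (by gcongr)
    _ ≤ μ A + ∑ i, ENNReal.ofReal ε := by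
      gcongr
      exact (measure_iUnion_fintype_le _ _).trans (Finset.sum_le_sum fun i _ => hB i)
    _ = μ A + ENNReal.ofReal (Fintype.card ι * ε) := by
      rw [Finset.sum_const, Finset.card_univ, nsmul_eq_mul, ENNReal.ofReal_mul (by positivity),
        ENNReal.ofReal_natCast]

lemma rpow_card_div_two_le_prod {ι : Type*} [Fintype ι] {a : ℝ} (ha : 0 ≤ a) {x : ι → ℝ}
    (hx : ∀ i, √a ≤ x i) : a ^ ((Fintype.card ι : ℝ) / 2) ≤ ∏ i, x i := by
  rw [div_eq_inv_mul, ← one_div, rpow_mul ha, ← sqrt_eq_rpow, rpow_natCast,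
    ← Finset.card_univ, ← Finset.prod_const]
  exact Finset.prod_le_prod (fun _ _ => sqrt_nonneg a) fun i _ => hx i

section Network

variable {Ω : Type*} [MeasurableSpace Ω] {μ : Measure Ω} {n H d : ℕ} {Z : Ω → Params n H d}

lemma measure_spec_lt_sqrt_le_exp
    (hindep : iIndepFun
      (fun (e : Σ k : Fin d, Fin (dim n H d ((k : ℕ) + 1)) × Fin (dim n H d k)) =>
        fun ω => (Z ω).W e.1 e.2.1 e.2.2) μ)
    (hgauss : ∀ (k : Fin d) i j,
      Measure.map (fun ω => (Z ω).W k i j) μ = gaussianReal 0 ((H : ℝ≥0)⁻¹))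
    (hd : 2 ≤ d) (hn : 1 ≤ n) (hH : 0 < H) (k : Fin d) {t : ℝ} (ht : 0 ≤ t) :
    μ {ω | spec ((Z ω).W k) < √(1 - t)} ≤ ENNReal.ofReal (exp (-(H * t ^ 2) / 4)) := by
  have hpq : (H : ℝ) ≤ dim n H d (k + 1) * dim n H d k := by
    exact_mod_cast le_dim_mul_dim hd hn hH k.isLt
  have hmax : (1 : ℝ) ≤ max (dim n H d (k + 1)) (dim n H d k) * (H : ℝ)⁻¹ := by
    rw [← div_eq_mul_inv, one_le_div (by positivity)]
    exact_mod_cast le_max_dim hd k.isLt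
  refine (measure_mono fun ω hω => ?_).trans <|
    (measure_spec_sq_le_le_exp (hindep.precomp sigma_mk_injective) (by positivity) (hgauss k)
      ht).trans (ENNReal.ofReal_le_ofReal ?_)
  · have hlt : spec ((Z ω).W k) ^ 2 < 1 - t := (lt_sqrt (norm_nonneg _)).mp hω
    have h1t : 0 < 1 - t := (sq_nonneg _).trans_lt hlt
    simp only [Set.mem_ofPred_eq, NNReal.coe_inv, NNReal.coe_natCast]
    nlinarith [mul_le_mul_of_nonneg_left hmax h1t.le]
  · gcongr

end Network

open MeasureTheory ProbabilityTheory in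
theorem stmt5_general {Ω : Type*} [MeasurableSpace Ω] (μ : Measure Ω) [IsProbabilityMeasure μ]
    {n H d : ℕ} (hd : 3 ≤ d) (hn : 1 ≤ n)
    (Z : Ω → Params n H d)
    (hindep : iIndepFun
      (fun (e : Σ k : Fin d, Fin (dim n H d ((k : ℕ) + 1)) × Fin (dim n H d k)) =>
        fun ω => (Z ω).W e.1 e.2.1 e.2.2) μ)
    (hgauss : ∀ (k : Fin d) i j,
      Measure.map (fun ω => (Z ω).W k i j) μ = gaussianReal 0 ((H : NNReal)⁻¹))
    (t : ℝ) (ht0 : 0 < t) (ht1 : t < 1) :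
    ENNReal.ofReal (1 - 2 * d * Real.exp (-((H : ℝ) * t ^ 2) / 8))
      ≤ μ {ω | (1 - t) ^ ((d : ℝ) / 2) ≤ ∏ k, spec ((Z ω).W k) ∧
            (1 - t) ^ ((d : ℝ) / 2) * (H : ℝ) ^ (d - 1)
              ≤ (H : ℝ) ^ (d - 1) * ∏ k, spec ((Z ω).W k)} := by
  obtain rfl | hH := Nat.eq_zero_or_pos H
  · rw [ENNReal.ofReal_eq_zero.mpr (by norm_num; norm_cast; omega)]
    exact zero_le
  refine le_trans ?_ (ofReal_one_sub_le_measure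
    (B := fun k => {ω | spec ((Z ω).W k) < √(1 - t)}) (fun ω hω => ?_)
    (exp_pos (-(H * t ^ 2) / 4)).le
    fun k => measure_spec_lt_sqrt_le_exp hindep hgauss (by omega) hn hH k ht0.le)
  · have hexp : exp (-(H * t ^ 2) / 4) ≤ exp (-(H * t ^ 2) / 8) :=
      exp_le_exp.mpr (by nlinarith [mul_nonneg (Nat.cast_nonneg H : (0 : ℝ) ≤ H) (sq_nonneg t)])
    rw [Fintype.card_fin]
    gcongr
    nlinarith [exp_pos (-(H * t ^ 2) / 4)]
  · have hprod := rpow_card_div_two_le_prod (sub_nonneg.mpr ht1.le) fun k => not_lt.mp (hω k)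
    rw [Fintype.card_fin] at hprod
    exact ⟨hprod, by rw [mul_comm]; gcongr⟩

open MeasureTheory ProbabilityTheory in
/-- for Xavier-initialized weights, the product of spectral norms is
at least `(1-t)^(d/2)` with probability `1 - 2d e^{-Ht²/8}`, so the spectral-norm
measure `H^(d-1) ∏ ‖Z_k‖₂` grows as `Ω(H^(d-1))`. -/
theorem stmt5 {Ω : Type*} [MeasurableSpace Ω] (μ : Measure Ω) [IsProbabilityMeasure μ]
    {n H d : ℕ} (hd : 3 ≤ d) (hn : 1 ≤ n) (hHn : n ≤ H)
    (Z : Ω → Params n H d)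
    (hindep : iIndepFun
      (fun (e : Σ k : Fin d, Fin (dim n H d ((k : ℕ) + 1)) × Fin (dim n H d k)) =>
        fun ω => (Z ω).W e.1 e.2.1 e.2.2) μ)
    (hgauss : ∀ (k : Fin d) i j,
      Measure.map (fun ω => (Z ω).W k i j) μ = gaussianReal 0 ((H : NNReal)⁻¹))
    (t : ℝ) (ht0 : 0 < t) (ht1 : t < 1) :
    ENNReal.ofReal (1 - 2 * d * Real.exp (-((H : ℝ) * t ^ 2) / 8))
      ≤ μ {ω | (1 - t) ^ ((d : ℝ) / 2) ≤ ∏ k, spec ((Z ω).W k) ∧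
            (1 - t) ^ ((d : ℝ) / 2) * (H : ℝ) ^ (d - 1)
              ≤ (H : ℝ) ^ (d - 1) * ∏ k, spec ((Z ω).W k)} :=
  stmt5_general μ hd hn Z hindep hgauss t ht0 ht1
end
end
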